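/- Let q ≥ 2 and let 𝒯 = (K_{t_1},…,K_{t_q}) with t_1 ≥ … ≥ t_q ≥ 3. Let S be a graph with two distinguished edges e and f such that: S is not q-Ramsey for 𝒯; in every 𝒯-free coloring of S, the edges e and f receive different colors; e and f share a common endpoint; and no triangle of S contains both e and f. Suppose in addition that there exist colors i ≠ j in {1,…,q} such that some 𝒯-free coloring of S assigns color i to e and color j to f, and some 𝒯-free coloring of S assigns color j to e and color i to f. Then there exists a graph S' with two distinguished edges e' and f' satisfying the same four properties (S' is not q-Ramsey for 𝒯; every 𝒯-free coloring assigns different colors to e' and f'; e' and f' share an endpoint; no triangle contains both) and additionally: for all colors i, j ∈ {1,…,q}, there exists a 𝒯-free coloring of S' assigning color i to e' and color j to f' if and only if there exists a 𝒯-free coloring of S' assigning color j to e' and color i to f'. -/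

import Mathlib

open SimpleGraph

namespace RamseyGadgets

variable {q : ℕ}

/-- The graph consisting of the edges of `G` receiving color `i` under `φ`. -/
def colorSub (G : SimpleGraph ℕ) (φ : Sym2 ℕ → Fin q) (i : Fin q) : SimpleGraph ℕ :=
  SimpleGraph.fromEdgeSet {e | e ∈ G.edgeSet ∧ φ e = i}

/-- `φ` is a `(K_{t 0}, …, K_{t (q-1)})`-free coloring of `G`: for every color `i`, the
edges of color `i` span no clique on `t i` vertices. -/
def FreeColoring (t : Fin q → ℕ) (G : SimpleGraph ℕ) (φ : Sym2 ℕ → Fin q) : Prop :=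
  ∀ i : Fin q, (colorSub G φ i).CliqueFree (t i)

/-- `G` is `q`-Ramsey for the tuple of cliques `(K_{t 0}, …, K_{t (q-1)})`. -/
def IsRamsey (t : Fin q → ℕ) (G : SimpleGraph ℕ) : Prop :=
  ∀ φ : Sym2 ℕ → Fin q, ¬ FreeColoring t G φ

/-- `G` is `q`-Ramsey-minimal for the tuple of cliques `(K_{t 0}, …, K_{t (q-1)})`. -/
def RamseyMinimal (t : Fin q → ℕ) (G : SimpleGraph ℕ) : Prop :=
  IsRamsey t G ∧ ∀ G' : SimpleGraph ℕ, G' < G → ¬ IsRamsey t G'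

/-- `ι` realizes an attachment of a gadget `R`, with signal edge `e`, to the edge `f` of `G`:
the copy of `R` under `ι` meets `G` exactly in the edge `f`, with which `e` is identified. -/
def IsAttachment (R : SimpleGraph ℕ) (e : Sym2 ℕ) (G : SimpleGraph ℕ) (f : Sym2 ℕ)
    (ι : ℕ ↪ ℕ) : Prop :=
  f ∈ G.edgeSet ∧ Sym2.map ι e = f ∧ ∀ v ∈ R.support, v ∉ e → ι v ∉ G.support

/-- `ι` realizes a joining of the edges `a` and `b` of `G` by `S` (with signal edges `e`, `f`). -/
def IsJoining (S : SimpleGraph ℕ) (e f : Sym2 ℕ) (G : SimpleGraph ℕ) (a b : Sym2 ℕ)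
    (ι : ℕ ↪ ℕ) : Prop :=
  a ∈ G.edgeSet ∧ b ∈ G.edgeSet ∧ Sym2.map ι e = a ∧ Sym2.map ι f = b ∧
    ∀ v ∈ S.support, v ∉ e → v ∉ f → ι v ∉ G.support

/-- `ψ` extends `φ` along the embedded copy of `R` given by `ι`. -/
def ExtendsOn (R : SimpleGraph ℕ) (ι : ℕ ↪ ℕ) (φ ψ : Sym2 ℕ → Fin q) : Prop :=
  ∀ e' ∈ R.edgeSet, ψ (Sym2.map ι e') = φ e'

/-- An `X`-determiner for the tuple `(K_{t 0}, …, K_{t (q-1)})` with signal edge `e`. -/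
structure IsDeterminer (t : Fin q → ℕ) (X : Set (Fin q)) (R : SimpleGraph ℕ) (e : Sym2 ℕ) :
    Prop where
  finite : R.edgeSet.Finite
  edge_mem : e ∈ R.edgeSet
  not_ramsey : ¬ IsRamsey t R
  color_mem : ∀ φ : Sym2 ℕ → Fin q, FreeColoring t R φ → φ e ∈ X
  exists_color : ∀ c ∈ X, ∃ φ : Sym2 ℕ → Fin q, FreeColoring t R φ ∧ φ e = c

/-- A safe `X`-determiner for the tuple `(K_{t 0}, …, K_{t (q-1)})` with signal edge `e`. -/
structure IsSafeDeterminer (t : Fin q → ℕ) (X : Set (Fin q)) (R : SimpleGraph ℕ) (e : Sym2 ℕ) :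
    Prop where
  finite : R.edgeSet.Finite
  edge_mem : e ∈ R.edgeSet
  not_ramsey : ¬ IsRamsey t R
  color_mem : ∀ φ : Sym2 ℕ → Fin q, FreeColoring t R φ → φ e ∈ X
  safe : ∀ c ∈ X, ∃ φ : Sym2 ℕ → Fin q, FreeColoring t R φ ∧ φ e = c ∧
    ∀ G : SimpleGraph ℕ, G.edgeSet.Finite → ∀ (f : Sym2 ℕ) (ι : ℕ ↪ ℕ),
      IsAttachment R e G f ι → ∀ ψ : Sym2 ℕ → Fin q, ExtendsOn R ι φ ψ →
        (FreeColoring t (G ⊔ R.map ι) ψ ↔ FreeColoring t G ψ)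

/-- An `X`-sender for the tuple `(K_{t 0}, …, K_{t (q-1)})` with signal edges `e` and `f`;
it is positive if `pos = true` and negative if `pos = false`. -/
structure IsSender (t : Fin q → ℕ) (pos : Bool) (X : Set (Fin q)) (S : SimpleGraph ℕ)
    (e f : Sym2 ℕ) : Prop where
  finite : S.edgeSet.Finite
  edge_e : e ∈ S.edgeSet
  edge_f : f ∈ S.edgeSet
  ne : e ≠ f
  not_ramsey : ¬ IsRamsey t S
  color_mem : ∀ φ : Sym2 ℕ → Fin q, FreeColoring t S φ →
    φ e ∈ X ∧ φ f ∈ X ∧ (if pos then φ e = φ f else φ e ≠ φ f)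
  exists_color : ∀ c₁ c₂ : Fin q, c₁ ∈ X → c₂ ∈ X → (if pos then c₁ = c₂ else c₁ ≠ c₂) →
    ∃ φ : Sym2 ℕ → Fin q, FreeColoring t S φ ∧ φ e = c₁ ∧ φ f = c₂

/-- A safe `X`-sender for the tuple `(K_{t 0}, …, K_{t (q-1)})` with signal edges `e` and `f`;
it is positive if `pos = true` and negative if `pos = false`. -/
structure IsSafeSender (t : Fin q → ℕ) (pos : Bool) (X : Set (Fin q)) (S : SimpleGraph ℕ)
    (e f : Sym2 ℕ) : Prop where
  finite : S.edgeSet.Finite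
  edge_e : e ∈ S.edgeSet
  edge_f : f ∈ S.edgeSet
  ne : e ≠ f
  not_ramsey : ¬ IsRamsey t S
  color_mem : ∀ φ : Sym2 ℕ → Fin q, FreeColoring t S φ →
    φ e ∈ X ∧ φ f ∈ X ∧ (if pos then φ e = φ f else φ e ≠ φ f)
  safe : ∀ c₁ c₂ : Fin q, c₁ ∈ X → c₂ ∈ X → (if pos then c₁ = c₂ else c₁ ≠ c₂) →
    ∃ φ : Sym2 ℕ → Fin q, FreeColoring t S φ ∧ φ e = c₁ ∧ φ f = c₂ ∧
      ∀ G : SimpleGraph ℕ, G.edgeSet.Finite → ∀ (a b : Sym2 ℕ) (ι : ℕ ↪ ℕ),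
        IsJoining S e f G a b ι → ∀ ψ : Sym2 ℕ → Fin q, ExtendsOn S ι φ ψ →
          (FreeColoring t (G ⊔ S.map ι) ψ ↔ FreeColoring t G ψ)

/-- A tuple of cliques `(K_{t 0}, …, K_{t (q-1)})` is distinguishable if, for every clique
size `m` represented in the tuple, there is a safe `X_m`-determiner, and, when `|X_m| > 1`,
safe positive and negative `X_m`-senders, where `X_m` is the set of colors `i` with `t i = m`. -/
def Distinguishable (t : Fin q → ℕ) : Prop :=
  ∀ m : ℕ, (∃ i, t i = m) →
    (∃ R e, IsSafeDeterminer t {i | t i = m} R e) ∧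
    (1 < {i : Fin q | t i = m}.ncard →
      (∃ S e f, IsSafeSender t true {i | t i = m} S e f) ∧
      (∃ S e f, IsSafeSender t false {i | t i = m} S e f))

/-- The minimum degree of a graph on `ℕ`, taken over the vertices that are not isolated. -/
noncomputable def minDegree (G : SimpleGraph ℕ) : ℕ :=
  sInf {d | ∃ v ∈ G.support, (G.neighborSet v).ncard = d}

/-- The smallest minimum degree of a `q`-Ramsey-minimal graph for
`(K_{t 0}, …, K_{t (q-1)})`. -/
noncomputable def sParam (t : Fin q → ℕ) : ℕ :=
  sInf {d | ∃ G : SimpleGraph ℕ, G.edgeSet.Finite ∧ RamseyMinimal t G ∧ minDegree G = d}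

/-- A color pattern witnessing the packing parameter. -/
def IsPackingPattern (t : Fin q → ℕ) {n : ℕ} (G : Fin q → SimpleGraph (Fin n)) : Prop :=
  (∀ i j, i ≠ j → Disjoint (G i).edgeSet (G j).edgeSet) ∧
  (∀ i, (G i).CliqueFree (t i + 1)) ∧
  (∀ lam : Fin n → Fin q, ∃ i, ∃ K : Finset (Fin n),
    (G i).IsNClique (t i) K ∧ ∀ v ∈ K, lam v = i)

/-- The packing parameter `P_q(t 0, …, t (q-1))`. -/
noncomputable def packing (t : Fin q → ℕ) : ℕ :=
  sInf {n | ∃ G : Fin q → SimpleGraph (Fin n), IsPackingPattern t G}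

/-! ### Auxiliary lemmas for the symmetrization construction -/

lemma colorSub_adj' {G : SimpleGraph ℕ} {φ : Sym2 ℕ → Fin q} {i : Fin q} {a b : ℕ} :
    (colorSub G φ i).Adj a b ↔ G.Adj a b ∧ φ s(a, b) = i := by
  simp only [colorSub, SimpleGraph.fromEdgeSet_adj, Set.mem_setOf_eq, SimpleGraph.mem_edgeSet]
  constructor
  · rintro ⟨⟨h1, h2⟩, -⟩; exact ⟨h1, h2⟩
  · rintro ⟨h1, h2⟩; exact ⟨⟨h1, h2⟩, h1.ne⟩

lemma colorSub_congr' {G : SimpleGraph ℕ} {φ φ' : Sym2 ℕ → Fin q} {i : Fin q}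
    (h : ∀ g ∈ G.edgeSet, φ g = φ' g) : colorSub G φ i = colorSub G φ' i := by
  unfold colorSub
  congr 1
  ext g
  exact ⟨fun ⟨h1, h2⟩ => ⟨h1, (h g h1) ▸ h2⟩, fun ⟨h1, h2⟩ => ⟨h1, (h g h1).symm ▸ h2⟩⟩

lemma freeColoring_congr' {t : Fin q → ℕ} {G : SimpleGraph ℕ} {φ φ' : Sym2 ℕ → Fin q}
    (h : ∀ g ∈ G.edgeSet, φ g = φ' g) (hf : FreeColoring t G φ') : FreeColoring t G φ := by
  intro i
  rw [colorSub_congr' h]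
  exact hf i

lemma cliqueFree_of_hom {G H : SimpleGraph ℕ} {n : ℕ} (f : ℕ → ℕ)
    (hf : Function.Injective f) (hadj : ∀ a b, G.Adj a b → H.Adj (f a) (f b))
    (h : H.CliqueFree n) : G.CliqueFree n := by
  intro K hK
  rw [SimpleGraph.isNClique_iff _] at hK
  refine h (K.image f) ((SimpleGraph.isNClique_iff _).mpr ⟨?_, ?_⟩)
  · intro p hp r hr hne
    simp only [Finset.coe_image, Set.mem_image, Finset.mem_coe] at hp hr
    obtain ⟨a, ha, rfl⟩ := hp
    obtain ⟨b, hb, rfl⟩ := hr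
    exact hadj a b (hK.1 ha hb (fun h' => hne (by rw [h'])))
  · rw [Finset.card_image_of_injective K hf, hK.2]

lemma freeColoring_mono_left {t : Fin q → ℕ} {G H : SimpleGraph ℕ} {φ : Sym2 ℕ → Fin q}
    (h : FreeColoring t (G ⊔ H) φ) : FreeColoring t G φ := by
  intro i
  refine cliqueFree_of_hom id Function.injective_id (fun a b hab => ?_) (h i)
  rw [colorSub_adj'] at hab ⊢
  exact ⟨(SimpleGraph.sup_adj _ _ _ _).mpr (Or.inl hab.1), hab.2⟩

lemma map_invol_adj (S : SimpleGraph ℕ) {σ : ℕ → ℕ} (hσ : Function.Involutive σ) (a b : ℕ) :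
    (S.map (⟨σ, hσ.injective⟩ : ℕ ↪ ℕ)).Adj a b ↔ S.Adj (σ a) (σ b) := by
  rw [SimpleGraph.map_adj]
  constructor
  · rintro ⟨a', b', h, rfl, rfl⟩
    simpa only [Function.Embedding.coeFn_mk, hσ a', hσ b'] using h
  · intro h
    exact ⟨σ a, σ b, h, hσ a, hσ b⟩

/-- The involution fixing `x`, swapping `u ↔ u'`, and shifting the rest of `A` up by `N`. -/
noncomputable def swapMap (A : Set ℕ) (N x u u' : ℕ) (v : ℕ) : ℕ :=
  open Classical in
  if v = u then u' else if v = u' then u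
  else if v ∈ A ∧ v ≠ x then v + N
  else if N ≤ v ∧ v - N ∈ A ∧ v - N ≠ u ∧ v - N ≠ u' ∧ v - N ≠ x then v - N else v

section SwapMap

variable {A : Set ℕ} {N x u u' : ℕ}

lemma swapMap_u : swapMap A N x u u' u = u' := by simp [swapMap]

lemma swapMap_u' (huu' : u ≠ u') : swapMap A N x u u' u' = u := by
  simp [swapMap, huu'.symm]

lemma swapMap_x (hN : ∀ v ∈ A, v < N) (hxA : x ∈ A) (hxu : x ≠ u) (hxu' : x ≠ u') :
    swapMap A N x u u' x = x := by
  have hxN : x < N := hN x hxA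
  simp only [swapMap, if_neg hxu, if_neg hxu']
  rw [if_neg (by tauto), if_neg (by omega)]

lemma swapMap_invol (hN : ∀ v ∈ A, v < N) (hxA : x ∈ A) (huA : u ∈ A) (hu'A : u' ∈ A)
    (huu' : u ≠ u') : Function.Involutive (swapMap A N x u u') := by
  intro v
  have huN : u < N := hN u huA
  have hu'N : u' < N := hN u' hu'A
  have hxN : x < N := hN x hxA
  by_cases h1 : v = u
  · subst h1; rw [swapMap_u, swapMap_u' huu']
  by_cases h2 : v = u'
  · subst h2; rw [swapMap_u' huu', swapMap_u]
  by_cases h3 : v ∈ A ∧ v ≠ x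
  · have hvN : v < N := hN v h3.1
    have hstep : swapMap A N x u u' v = v + N := by
      simp only [swapMap, if_neg h1, if_neg h2, if_pos h3]
    rw [hstep]
    have hA2 : v + N ∉ A := fun h => by have := hN _ h; omega
    simp only [swapMap]
    rw [if_neg (by omega), if_neg (by omega), if_neg (by tauto),
      if_pos (by rw [Nat.add_sub_cancel]; exact ⟨by omega, h3.1, h1, h2, h3.2⟩)]
    omega
  by_cases h4 : N ≤ v ∧ v - N ∈ A ∧ v - N ≠ u ∧ v - N ≠ u' ∧ v - N ≠ x
  · have hstep : swapMap A N x u u' v = v - N := by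
      simp only [swapMap, if_neg h1, if_neg h2, if_neg h3, if_pos h4]
    rw [hstep]
    simp only [swapMap]
    rw [if_neg h4.2.2.1, if_neg h4.2.2.2.1, if_pos ⟨h4.2.1, h4.2.2.2.2⟩]
    omega
  · have hstep : swapMap A N x u u' v = v := by
      simp only [swapMap, if_neg h1, if_neg h2, if_neg h3, if_neg h4]
    rw [hstep, hstep]

lemma swapMap_support (hN : ∀ v ∈ A, v < N) :
    ∀ v ∈ A, swapMap A N x u u' v ∈ A → (v = x ∨ v = u ∨ v = u') := by
  intro v hv hmem
  by_contra hc
  push_neg at hc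
  have hstep : swapMap A N x u u' v = v + N := by
    simp only [swapMap]
    rw [if_neg hc.2.1, if_neg hc.2.2, if_pos ⟨hv, hc.1⟩]
  rw [hstep] at hmem
  have h1 := hN _ hmem
  have h2 := hN _ hv
  omega

end SwapMap

section Triple

variable {S : SimpleGraph ℕ} {σ : ℕ → ℕ} {x u u' : ℕ}
  (hxu : S.Adj x u) (hxu' : S.Adj x u') (hnadj : ¬ S.Adj u u')
  (hsx : σ x = x) (hsu : σ u = u') (hsu' : σ u' = u)

include hxu hxu' hnadj hsx hsu hsu' in
lemma adj_triple : ∀ a b : ℕ, (a = x ∨ a = u ∨ a = u') → (b = x ∨ b = u ∨ b = u') →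
    S.Adj a b → S.Adj (σ a) (σ b) := by
  rintro a b (rfl | rfl | rfl) (rfl | rfl | rfl) h
  · exact absurd rfl h.ne
  · rw [hsx, hsu]; exact hxu'
  · rw [hsx, hsu']; exact hxu
  · rw [hsu, hsx]; exact hxu'.symm
  · exact absurd rfl h.ne
  · exact absurd h hnadj
  · rw [hsu', hsx]; exact hxu.symm
  · exact absurd h.symm hnadj
  · exact absurd rfl h.ne

include hxu hxu' hnadj hsx hsu hsu' in
lemma adj_pair_class : ∀ a b : ℕ, (a = x ∨ a = u ∨ a = u') → (b = x ∨ b = u ∨ b = u') →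
    S.Adj a b → (s(a, b) = s(x, u) ∧ s(σ a, σ b) = s(x, u')) ∨
      (s(a, b) = s(x, u') ∧ s(σ a, σ b) = s(x, u)) := by
  rintro a b (rfl | rfl | rfl) (rfl | rfl | rfl) h
  · exact absurd rfl h.ne
  · exact Or.inl ⟨rfl, by rw [hsx, hsu]⟩
  · exact Or.inr ⟨rfl, by rw [hsx, hsu']⟩
  · exact Or.inl ⟨Sym2.eq_swap, by rw [hsu, hsx]; exact Sym2.eq_swap⟩
  · exact absurd rfl h.ne
  · exact absurd h hnadj
  · exact Or.inr ⟨Sym2.eq_swap, by rw [hsu', hsx]; exact Sym2.eq_swap⟩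
  · exact absurd h.symm hnadj
  · exact absurd rfl h.ne

end Triple

section MainSup

variable {t : Fin q → ℕ} {S : SimpleGraph ℕ} {σ : ℕ → ℕ} {x u u' : ℕ}

lemma triple_closed (hsx : σ x = x) (hsu : σ u = u') (hsu' : σ u' = u) :
    ∀ c : ℕ, (c = x ∨ c = u ∨ c = u') → (σ c = x ∨ σ c = u ∨ σ c = u') := by
  rintro c (rfl | rfl | rfl)
  · rw [hsx]; tauto
  · rw [hsu]; tauto
  · rw [hsu']; tauto

/-- The key freeness-combination lemma for the symmetric double `S ⊔ σ(S)`. -/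
lemma free_sup_of_invol (h3 : ∀ i, 3 ≤ t i) (hσ : Function.Involutive σ)
    (hxu : S.Adj x u) (hxu' : S.Adj x u') (hnadj : ¬ S.Adj u u')
    (hsx : σ x = x) (hsu : σ u = u') (hsu' : σ u' = u)
    (hA : ∀ a, a ∈ S.support → σ a ∈ S.support → a = x ∨ a = u ∨ a = u')
    (ψ : Sym2 ℕ → Fin q) (h1 : FreeColoring t S ψ)
    (h2 : FreeColoring t S (ψ ∘ Sym2.map σ)) :
    FreeColoring t (S ⊔ S.map (⟨σ, hσ.injective⟩ : ℕ ↪ ℕ)) ψ := by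
  classical
  intro i K hK
  rw [SimpleGraph.isNClique_iff _] at hK
  have hcard : K.card = t i := hK.2
  have h2le : 1 < K.card := by have := h3 i; omega
  -- every vertex of K lies in A ∪ σ⁻¹(A)
  have hmem : ∀ v ∈ K, v ∈ S.support ∨ σ v ∈ S.support := by
    intro v hv
    obtain ⟨w, hw, hwv⟩ := Finset.exists_mem_ne h2le v
    have hadj := colorSub_adj'.mp (hK.1 hv hw (Ne.symm hwv))
    rcases (SimpleGraph.sup_adj _ _ _ _).mp hadj.1 with h | h
    · exact Or.inl (S.mem_support.mpr ⟨w, h⟩)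
    · exact Or.inr (S.mem_support.mpr ⟨σ w, (map_invol_adj S hσ v w).mp h⟩)
  by_cases hall : ∀ v ∈ K, σ v ∈ S.support
  · -- K lies in the mirror copy: σ(K) is a clique witnessing non-freeness of ψ ∘ map σ
    refine h2 i (K.image σ) ((SimpleGraph.isNClique_iff _).mpr ⟨?_, ?_⟩)
    · intro p hp r hr hne
      simp only [Finset.coe_image, Set.mem_image, Finset.mem_coe] at hp hr
      obtain ⟨a, ha, rfl⟩ := hp
      obtain ⟨b, hb, rfl⟩ := hr
      have hab : a ≠ b := fun h => hne (by rw [h])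
      have hadj := colorSub_adj'.mp (hK.1 ha hb hab)
      have hS : S.Adj (σ a) (σ b) := by
        rcases (SimpleGraph.sup_adj _ _ _ _).mp hadj.1 with h | h
        · have haA : a ∈ S.support := S.mem_support.mpr ⟨b, h⟩
          have hbA : b ∈ S.support := S.mem_support.mpr ⟨a, h.symm⟩
          exact adj_triple hxu hxu' hnadj hsx hsu hsu' a b
            (hA a haA (hall a ha)) (hA b hbA (hall b hb)) h
        · exact (map_invol_adj S hσ a b).mp h
      rw [colorSub_adj']
      refine ⟨hS, ?_⟩
      show ψ (Sym2.map σ s(σ a, σ b)) = i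
      rw [Sym2.map_pair_eq, hσ a, hσ b]
      exact hadj.2
    · rw [Finset.card_image_of_injective K hσ.injective, hcard]
  · -- K lies in the original copy: K is a clique witnessing non-freeness of ψ
    push_neg at hall
    obtain ⟨p, hp, hpns⟩ := hall
    have hKA : ∀ v ∈ K, v ∈ S.support := by
      intro v hv
      by_cases hvp : v = p
      · subst hvp
        rcases hmem v hv with h | h
        · exact h
        · exact absurd h hpns
      · have hadj := colorSub_adj'.mp (hK.1 hp hv (fun h => hvp h.symm))
        rcases (SimpleGraph.sup_adj _ _ _ _).mp hadj.1 with h | h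
        · exact S.mem_support.mpr ⟨p, h.symm⟩
        · exact absurd (S.mem_support.mpr ⟨σ v, (map_invol_adj S hσ p v).mp h⟩) hpns
    refine h1 i K ((SimpleGraph.isNClique_iff _).mpr ⟨?_, hcard⟩)
    intro a ha b hb hne
    have hadj := colorSub_adj'.mp (hK.1 ha hb hne)
    have hS : S.Adj a b := by
      rcases (SimpleGraph.sup_adj _ _ _ _).mp hadj.1 with h | h
      · exact h
      · have h' := (map_invol_adj S hσ a b).mp h
        have haA : a = x ∨ a = u ∨ a = u' :=
          hA a (hKA a ha) (S.mem_support.mpr ⟨σ b, h'⟩)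
        have hbA : b = x ∨ b = u ∨ b = u' :=
          hA b (hKA b hb) (S.mem_support.mpr ⟨σ a, h'.symm⟩)
        have := adj_triple hxu hxu' hnadj hsx hsu hsu' (σ a) (σ b)
          (triple_closed hsx hsu hsu' a haA) (triple_closed hsx hsu hsu' b hbA) h'
        rwa [hσ a, hσ b] at this
    exact colorSub_adj'.mpr ⟨hS, hadj.2⟩

/-- Precomposing a free coloring of a σ-invariant graph with σ gives a free coloring. -/
lemma free_comp_of_invol {G : SimpleGraph ℕ} (hσ : Function.Involutive σ)
    (hmap : ∀ a b, G.Adj a b → G.Adj (σ a) (σ b)) {ψ : Sym2 ℕ → Fin q}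
    (h : FreeColoring t G ψ) : FreeColoring t G (ψ ∘ Sym2.map σ) := by
  intro i
  refine cliqueFree_of_hom σ hσ.injective (fun a b hab => ?_) (h i)
  rw [colorSub_adj'] at hab ⊢
  refine ⟨hmap a b hab.1, ?_⟩
  have : (ψ ∘ Sym2.map σ) s(a, b) = ψ s(σ a, σ b) := by
    simp [Sym2.map_pair_eq]
  rw [← Sym2.map_pair_eq]
  exact this ▸ hab.2

end MainSup


/-- Let `𝒯 = (K_{t_1}, …, K_{t_q})` with `q ≥ 2` and `t_1 ≥ … ≥ t_q ≥ 3`,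
and let `S` be a gadget with adjacent signal edges `e = xu`, `f = xu'` lying in no common
triangle, not `q`-Ramsey for `𝒯`, whose `𝒯`-free colorings always separate `e` and `f`.
If some pair of distinct colors `i ≠ j` occurs on `(e, f)` in both orders among `𝒯`-free
colorings of `S`, then there is a gadget `S'` with the same four properties whose allowed
color pairs on its signal edges are symmetric. -/
theorem symmetrization (q : ℕ) (hq : 2 ≤ q) (t : Fin q → ℕ)
    (hmono : Antitone t) (h3 : ∀ i, 3 ≤ t i)
    (S : SimpleGraph ℕ) (x u u' : ℕ)
    (hfin : S.edgeSet.Finite) (hxu : S.Adj x u) (hxu' : S.Adj x u') (huu' : u ≠ u')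
    (hnadj : ¬ S.Adj u u') (hnr : ¬ IsRamsey t S)
    (hdiff : ∀ φ : Sym2 ℕ → Fin q, FreeColoring t S φ → φ s(x, u) ≠ φ s(x, u'))
    (hsym : ∃ i j : Fin q, i ≠ j ∧
      (∃ φ : Sym2 ℕ → Fin q, FreeColoring t S φ ∧ φ s(x, u) = i ∧ φ s(x, u') = j) ∧
      (∃ φ : Sym2 ℕ → Fin q, FreeColoring t S φ ∧ φ s(x, u) = j ∧ φ s(x, u') = i)) :
    ∃ (S' : SimpleGraph ℕ) (y v v' : ℕ), S'.edgeSet.Finite ∧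
      S'.Adj y v ∧ S'.Adj y v' ∧ v ≠ v' ∧ ¬ S'.Adj v v' ∧
      ¬ IsRamsey t S' ∧
      (∀ φ : Sym2 ℕ → Fin q, FreeColoring t S' φ → φ s(y, v) ≠ φ s(y, v')) ∧
      (∀ i j : Fin q,
        (∃ φ : Sym2 ℕ → Fin q, FreeColoring t S' φ ∧ φ s(y, v) = i ∧ φ s(y, v') = j) ↔
        (∃ φ : Sym2 ℕ → Fin q, FreeColoring t S' φ ∧ φ s(y, v) = j ∧ φ s(y, v') = i)) := by
  classical
  -- The support of `S` is finite.
  have hsupfin : S.support.Finite := by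
    have hsub : S.support ⊆ ⋃ g ∈ S.edgeSet, {v | v ∈ g} := by
      intro v hv
      obtain ⟨w, hw⟩ := S.mem_support.mp hv
      exact Set.mem_biUnion (S.mem_edgeSet.mpr hw) (by simp)
    refine Set.Finite.subset (Set.Finite.biUnion hfin fun g _ => ?_) hsub
    induction g using Sym2.ind with
    | _ a b =>
      refine Set.Finite.subset ((Set.finite_singleton b).insert a) ?_
      intro v hv
      simp only [Set.mem_setOf_eq, Sym2.mem_iff] at hv
      simp only [Set.mem_insert_iff, Set.mem_singleton_iff]
      exact hv
  have hxA : x ∈ S.support := S.mem_support.mpr ⟨u, hxu⟩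
  have huA : u ∈ S.support := S.mem_support.mpr ⟨x, hxu.symm⟩
  have hu'A : u' ∈ S.support := S.mem_support.mpr ⟨x, hxu'.symm⟩
  set N : ℕ := hsupfin.toFinset.sup id + 1 with hNdef
  have hN : ∀ v ∈ S.support, v < N := by
    intro v hv
    have : v ≤ hsupfin.toFinset.sup id :=
      Finset.le_sup (f := id) (hsupfin.mem_toFinset.mpr hv)
    omega
  set σ : ℕ → ℕ := swapMap S.support N x u u' with hσdef
  have hinv : Function.Involutive σ := swapMap_invol hN hxA huA hu'A huu'
  have hsx : σ x = x := swapMap_x hN hxA hxu.ne hxu'.ne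
  have hsu : σ u = u' := swapMap_u
  have hsu'2 : σ u' = u := swapMap_u' huu'
  have hAprop : ∀ a, a ∈ S.support → σ a ∈ S.support → a = x ∨ a = u ∨ a = u' :=
    swapMap_support hN
  refine ⟨S ⊔ S.map (⟨σ, hinv.injective⟩ : ℕ ↪ ℕ), x, u, u', ?_, ?_, ?_, huu', ?_, ?_, ?_, ?_⟩
  · -- finiteness
    rw [SimpleGraph.edgeSet_sup]
    refine Set.Finite.union hfin ?_
    have hsub : (S.map (⟨σ, hinv.injective⟩ : ℕ ↪ ℕ)).edgeSet ⊆ Sym2.map σ '' S.edgeSet := by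
      intro g hg
      induction g using Sym2.ind with
      | _ a b =>
        have hadj : (S.map (⟨σ, hinv.injective⟩ : ℕ ↪ ℕ)).Adj a b :=
          ((S.map (⟨σ, hinv.injective⟩ : ℕ ↪ ℕ)).mem_edgeSet).mp hg
        rw [SimpleGraph.map_adj] at hadj
        obtain ⟨a', b', h, ha, hb⟩ := hadj
        exact ⟨s(a', b'), S.mem_edgeSet.mpr h, by rw [Sym2.map_pair_eq]; simp_all⟩
    exact (hfin.image _).subset hsub
  · exact (SimpleGraph.sup_adj _ _ _ _).mpr (Or.inl hxu)
  · exact (SimpleGraph.sup_adj _ _ _ _).mpr (Or.inl hxu')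
  · -- no edge between u and u'
    intro h
    rcases (SimpleGraph.sup_adj _ _ _ _).mp h with h | h
    · exact hnadj h
    · have := (map_invol_adj S hinv u u').mp h
      rw [hsu, hsu'2] at this
      exact hnadj this.symm
  · -- not Ramsey
    obtain ⟨i, j, hij, ⟨φ₁, hφ₁, hφ₁e, hφ₁f⟩, ⟨φ₂, hφ₂, hφ₂e, hφ₂f⟩⟩ := hsym
    intro hR
    set ψ : Sym2 ℕ → Fin q :=
      fun g => if g ∈ S.edgeSet then φ₁ g else φ₂ (Sym2.map σ g) with hψdef
    refine hR ψ (free_sup_of_invol h3 hinv hxu hxu' hnadj hsx hsu hsu'2 hAprop ψ ?_ ?_)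
    · exact freeColoring_congr' (fun g hg => if_pos hg) hφ₁
    · refine freeColoring_congr' (fun g hg => ?_) hφ₂
      induction g using Sym2.ind with
      | _ a b =>
        have hg' : S.Adj a b := S.mem_edgeSet.mp hg
        show ψ (Sym2.map σ s(a, b)) = φ₂ s(a, b)
        rw [Sym2.map_pair_eq]
        by_cases hmem2 : s(σ a, σ b) ∈ S.edgeSet
        · have ha3 : a = x ∨ a = u ∨ a = u' :=
            hAprop a (S.mem_support.mpr ⟨b, hg'⟩)
              (S.mem_support.mpr ⟨σ b, S.mem_edgeSet.mp hmem2⟩)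
          have hb3 : b = x ∨ b = u ∨ b = u' :=
            hAprop b (S.mem_support.mpr ⟨a, hg'.symm⟩)
              (S.mem_support.mpr ⟨σ a, (S.mem_edgeSet.mp hmem2).symm⟩)
          rcases adj_pair_class hxu hxu' hnadj hsx hsu hsu'2 a b ha3 hb3 hg' with
            ⟨hab, hsab⟩ | ⟨hab, hsab⟩
          · have h1 : ψ s(x, u') = φ₁ s(x, u') := if_pos (S.mem_edgeSet.mpr hxu')
            rw [hsab, hab, h1, hφ₁f, hφ₂e]
          · have h1 : ψ s(x, u) = φ₁ s(x, u) := if_pos (S.mem_edgeSet.mpr hxu)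
            rw [hsab, hab, h1, hφ₁e, hφ₂f]
        · have h1 : ψ s(σ a, σ b) = φ₂ (Sym2.map σ s(σ a, σ b)) := if_neg hmem2
          rw [h1, Sym2.map_pair_eq, hinv a, hinv b]
  · -- signal edges always get distinct colors
    exact fun φ hφ => hdiff φ (freeColoring_mono_left hφ)
  · -- symmetry of allowed color pairs
    have hmap : ∀ a b, (S ⊔ S.map (⟨σ, hinv.injective⟩ : ℕ ↪ ℕ)).Adj a b →
        (S ⊔ S.map (⟨σ, hinv.injective⟩ : ℕ ↪ ℕ)).Adj (σ a) (σ b) := by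
      intro a b hab
      rcases (SimpleGraph.sup_adj _ _ _ _).mp hab with h | h
      · refine (SimpleGraph.sup_adj _ _ _ _).mpr (Or.inr ?_)
        rw [map_invol_adj S hinv, hinv a, hinv b]
        exact h
      · exact (SimpleGraph.sup_adj _ _ _ _).mpr (Or.inl ((map_invol_adj S hinv a b).mp h))
    have key : ∀ i j : Fin q,
        (∃ φ : Sym2 ℕ → Fin q, FreeColoring t (S ⊔ S.map (⟨σ, hinv.injective⟩ : ℕ ↪ ℕ)) φ ∧
          φ s(x, u) = i ∧ φ s(x, u') = j) →
        (∃ φ : Sym2 ℕ → Fin q, FreeColoring t (S ⊔ S.map (⟨σ, hinv.injective⟩ : ℕ ↪ ℕ)) φ ∧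
          φ s(x, u) = j ∧ φ s(x, u') = i) := by
      rintro i j ⟨φ, hφ, he, hf2⟩
      refine ⟨φ ∘ Sym2.map σ, free_comp_of_invol hinv hmap hφ, ?_, ?_⟩
      · show φ (Sym2.map σ s(x, u)) = j
        rw [Sym2.map_pair_eq, hsx, hsu]
        exact hf2
      · show φ (Sym2.map σ s(x, u')) = i
        rw [Sym2.map_pair_eq, hsx, hsu'2]
        exact he
    exact fun i j => ⟨key i j, key j i⟩


end RamseyGadgets
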